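/- arXiv:2007.15184 — 3 statements merged into one kernel-verified Lean document; each statement's English description precedes it below -/
import Mathlib

section
/- Suppose v₋, v₊ > 0, u₋ > u₊, and v₋ ≠ v₊. Then the quadratic equation (v₋ - v₊)·u² - 2(v₋u₋ - v₊u₊)·u + (v₋u₋² - v₊u₊²) = 0 has exactly two roots u⁽¹⁾ = (√v₋·u₋ - √v₊·u₊)/(√v₋ - √v₊) and u⁽²⁾ = (√v₋·u₋ + √v₊·u₊)/(√v₋ + √v₊), and only u⁽²⁾ satisfies the entropy condition u₊ < u < u₋. -/
open Real Set

theorem stmt2 (vm vp um up : ℝ) (hvm : 0 < vm) (hvp : 0 < vp) (hu : up < um)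
    (hne : vm ≠ vp) :
    (∀ u : ℝ,
      (vm - vp) * u ^ 2 - 2 * (vm * um - vp * up) * u + (vm * um ^ 2 - vp * up ^ 2) = 0 ↔
        u = (Real.sqrt vm * um - Real.sqrt vp * up) / (Real.sqrt vm - Real.sqrt vp) ∨
        u = (Real.sqrt vm * um + Real.sqrt vp * up) / (Real.sqrt vm + Real.sqrt vp)) ∧
    (up < (Real.sqrt vm * um + Real.sqrt vp * up) / (Real.sqrt vm + Real.sqrt vp) ∧
      (Real.sqrt vm * um + Real.sqrt vp * up) / (Real.sqrt vm + Real.sqrt vp) < um) ∧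
    ¬(up < (Real.sqrt vm * um - Real.sqrt vp * up) / (Real.sqrt vm - Real.sqrt vp) ∧
      (Real.sqrt vm * um - Real.sqrt vp * up) / (Real.sqrt vm - Real.sqrt vp) < um) := by
  set a := Real.sqrt vm with hA
  set b := Real.sqrt vp with hB
  have ha0 : 0 < a := Real.sqrt_pos.mpr hvm
  have hb0 : 0 < b := Real.sqrt_pos.mpr hvp
  have ha2 : a ^ 2 = vm := Real.sq_sqrt hvm.le
  have hb2 : b ^ 2 = vp := Real.sq_sqrt hvp.le
  have hab : a ≠ b := fun h => hne (by rw [← ha2, ← hb2, h])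
  have hsub : a - b ≠ 0 := sub_ne_zero.mpr hab
  have haddp : 0 < a + b := by positivity
  have hadd : a + b ≠ 0 := ne_of_gt haddp
  refine ⟨fun u => ?_, ⟨?_, ?_⟩, ?_⟩
  · have key : (vm - vp) * u ^ 2 - 2 * (vm * um - vp * up) * u +
        (vm * um ^ 2 - vp * up ^ 2) =
        ((a - b) * (a + b)) *
          ((u - (a * um - b * up) / (a - b)) * (u - (a * um + b * up) / (a + b))) := by
      rw [← ha2, ← hb2]; field_simp; ring
    rw [key]
    simp [mul_eq_zero, sub_eq_zero, hab, hadd]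
  · rw [lt_div_iff₀ haddp]; nlinarith
  · rw [div_lt_iff₀ haddp]; nlinarith
  · rintro ⟨h1, h2⟩
    rcases lt_or_gt_of_ne hab with h | h
    · rw [lt_div_iff_of_neg (by linarith : a - b < 0)] at h1
      nlinarith
    · rw [div_lt_iff₀ (by linarith : 0 < a - b)] at h2
      nlinarith
end

section
/- Suppose v₋, v₊ > 0 and u₋ > u₊. Let u_δ = (√v₋·u₋ + √v₊·u₊)/(√v₋ + √v₊) and w₀ = √(v₋v₊)·(u₋ - u₊). Then σ = u_δ, w₀ = -σ(v₋ - v₊) + (v₋u₋ - v₊u₊), and w₀·u_δ = -σ(v₋u₋ - v₊u₊) + (v₋u₋² - v₊u₊²). -/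
open Real

theorem stmt3 (vm vp um up : ℝ) (hvm : 0 < vm) (hvp : 0 < vp) (hu : up < um) :
    let u_δ := (Real.sqrt vm * um + Real.sqrt vp * up) / (Real.sqrt vm + Real.sqrt vp)
    let w₀ := Real.sqrt (vm * vp) * (um - up)
    let σ := u_δ
    σ = u_δ ∧
      w₀ = -σ * (vm - vp) + (vm * um - vp * up) ∧
      w₀ * u_δ = -σ * (vm * um - vp * up) + (vm * um ^ 2 - vp * up ^ 2) := by
  intro u_δ w₀ σ
  have ha : 0 < Real.sqrt vm := Real.sqrt_pos.mpr hvm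
  have hb : 0 < Real.sqrt vp := Real.sqrt_pos.mpr hvp
  have hab : Real.sqrt vm + Real.sqrt vp ≠ 0 := by positivity
  have ha2 : Real.sqrt vm ^ 2 = vm := Real.sq_sqrt hvm.le
  have hb2 : Real.sqrt vp ^ 2 = vp := Real.sq_sqrt hvp.le
  have hmul : Real.sqrt (vm * vp) = Real.sqrt vm * Real.sqrt vp :=
    Real.sqrt_mul hvm.le vp
  refine ⟨rfl, ?_, ?_⟩ <;> simp only [u_δ, w₀, σ, hmul] <;> field_simp
  · linear_combination Real.sqrt vp * (um - up) * ha2 + Real.sqrt vm * (um - up) * hb2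
  · linear_combination Real.sqrt vp * um * (um - up) * ha2 + Real.sqrt vm * up * (um - up) * hb2
end

section
/- Suppose (σ, w₀, u_δ) and (σ', w₀', u_δ') both solve the system σ = u_δ^k, w₀ = -σ(v₋-v₊)+(v₋u₋^k - v₊u₊^k), w₀u_δ = -σ(v₋u₋-v₊u₊)+(v₋u₋^{k+1}-v₊u₊^{k+1}), with the entropy conditions u₊^k < σ < u₋^k and u₊^k < σ' < u₋^k, where k = 1, v₋, v₊ > 0, u₋ > u₊. Then (σ, w₀, u_δ) = (σ', w₀', u_δ'). -/
theorem stmt19 (vm vp um up : ℝ) (hvm : 0 < vm) (hvp : 0 < vp) (hu : up < um)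
    (σ w₀ u_δ σ' w₀' u_δ' : ℝ)
    (h1 : σ = u_δ) (h2 : w₀ = -σ * (vm - vp) + (vm * um - vp * up))
    (h3 : w₀ * u_δ = -σ * (vm * um - vp * up) + (vm * um ^ 2 - vp * up ^ 2))
    (he : up < σ ∧ σ < um)
    (h1' : σ' = u_δ') (h2' : w₀' = -σ' * (vm - vp) + (vm * um - vp * up))
    (h3' : w₀' * u_δ' = -σ' * (vm * um - vp * up) + (vm * um ^ 2 - vp * up ^ 2))
    (he' : up < σ' ∧ σ' < um) :
    σ = σ' ∧ w₀ = w₀' ∧ u_δ = u_δ' := by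
  obtain ⟨h4, h5⟩ := he
  obtain ⟨h4', h5'⟩ := he'
  subst h1 h1' h2 h2'
  have key : σ = σ' := by
    have q : (σ - σ') * ((vm - vp) * (σ + σ') - 2 * (vm * um - vp * up)) = 0 := by
      nlinarith [h3, h3']
    have neg : (vm - vp) * (σ + σ') - 2 * (vm * um - vp * up) < 0 := by
      nlinarith [mul_pos hvm (sub_pos.mpr h5), mul_pos hvm (sub_pos.mpr h5'),
        mul_pos hvp (sub_pos.mpr h4), mul_pos hvp (sub_pos.mpr h4')]
    rcases mul_eq_zero.mp q with h | h
    · linarith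
    · linarith
  subst key
  exact ⟨rfl, rfl, rfl⟩
end
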